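/- Let ψ : ℕ → ℝ≥0 be monotone (either non-increasing or non-decreasing). Then liminf_{q→∞} (-log ψ(q))/(log q) = liminf_{t→∞} (-log ψ(2^t))/(log 2^t). -/

import Mathlib

open Filter Real

/-!
The dyadic ratios form a subsequence, which gives one inequality. Conversely, every `q ≥ 1`
lies in a block `2 ^ t ≤ q < 2 ^ (t + 1)`, and monotonicity of `ψ` bounds `-log ψ q` below by
`-log ψ` at the left end (non-increasing `ψ`) or the right end (non-decreasing `ψ`) of the block.
The denominator `log q` differs from `log 2 ^ t` and `log 2 ^ (t + 1)` by at most `log 2`, an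
error negligible as `q → ∞`, so every lower bound `c' > c` eventually valid for the dyadic
ratios makes `c` an eventual lower bound for all ratios.
-/

theorem Nat.tendsto_log_atTop {b : ℕ} (hb : 1 < b) : Tendsto (Nat.log b) atTop atTop :=
  tendsto_atTop_atTop.2 fun t =>
    ⟨b ^ t, fun _ hn => (Nat.log_pow hb t).symm.le.trans (Nat.log_mono_right hn)⟩

theorem Real.natLog_mul_log_le_log {b n : ℕ} (hb : 1 < b) (hn : n ≠ 0) :
    (Nat.log b n : ℝ) * log b ≤ log n := by
  have hpow : ((b ^ Nat.log b n : ℕ) : ℝ) ≤ n := by exact_mod_cast Nat.pow_log_le_self b hn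
  have := log_le_log (by positivity) hpow
  rwa [Nat.cast_pow, log_pow] at this

theorem Real.log_lt_natLog_add_one_mul_log {b n : ℕ} (hb : 1 < b) (hn : n ≠ 0) :
    log n < (Nat.log b n + 1) * log b := by
  have hpow : (n : ℝ) < ((b ^ (Nat.log b n + 1) : ℕ) : ℝ) := by
    exact_mod_cast Nat.lt_pow_succ_log_self hb n
  have := log_lt_log (by positivity) hpow
  push_cast at this
  rwa [log_pow, Nat.cast_add_one] at this

theorem mul_lt_mul_of_abs_sub_le {x y δ c c' : ℝ} (hxy : |x - y| ≤ δ)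
    (h : |c| * δ < (c' - c) * y) : c * x < c' * y := by
  have : c * (x - y) ≤ |c| * δ := by
    calc c * (x - y) ≤ |c * (x - y)| := le_abs_self _
      _ ≤ |c| * δ := by rw [abs_mul]; exact mul_le_mul_of_nonneg_left hxy (abs_nonneg c)
  linarith

theorem EReal.liminf_coe_le_liminf_coe {α β : Type*} {f : Filter α} {g : Filter β}
    {u : α → ℝ} {v : β → ℝ}
    (h : ∀ c c' : ℝ, c < c' → (∀ᶠ b in g, c' < v b) → ∀ᶠ a in f, c < u a) :
    liminf (fun b => (v b : EReal)) g ≤ liminf (fun a => (u a : EReal)) f := by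
  refine (le_liminf_iff).2 fun y hy => ?_
  induction y using EReal.rec with
  | bot => exact Eventually.of_forall fun _ => EReal.bot_lt_coe _
  | top => exact absurd hy not_top_lt
  | coe c =>
    obtain ⟨c', hcc', hc'⟩ := EReal.exists_between_coe_real hy
    have hv : ∀ᶠ b in g, c' < v b :=
      (eventually_lt_of_lt_liminf hc').mono fun _ => EReal.coe_lt_coe_iff.1
    exact (h c c' (EReal.coe_lt_coe_iff.1 hcc') hv).mono fun _ => EReal.coe_lt_coe_iff.2

theorem eventually_lt_div_log_of_dyadic {L : ℕ → ℝ} {s : ℕ → ℕ} (hs : Tendsto s atTop atTop)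
    (hL : ∀ q : ℕ, q ≠ 0 → L (2 ^ s q) ≤ L q)
    (hlog : ∀ q : ℕ, q ≠ 0 → |log q - s q * log 2| ≤ log 2)
    {c c' : ℝ} (hc : c < c') (hev : ∀ᶠ t : ℕ in atTop, c' < L (2 ^ t) / (t * log 2)) :
    ∀ᶠ q : ℕ in atTop, c < L q / log q := by
  have hlog2 : 0 < log 2 := log_pos one_lt_two
  have hbig : ∀ᶠ t : ℕ in atTop, 0 < t ∧ |c| < (c' - c) * t :=
    (eventually_gt_atTop 0).and <|
      ((tendsto_natCast_atTop_atTop.const_mul_atTop (sub_pos.2 hc)).eventually_gt_atTop |c|)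
  filter_upwards [hs.eventually (hev.and hbig), eventually_gt_atTop 1]
    with q ⟨hq_dyadic, hq_pos, hq_big⟩ hq
  have hq0 : q ≠ 0 := by omega
  rw [lt_div_iff₀ (by positivity)] at hq_dyadic
  rw [lt_div_iff₀ (log_pos (by exact_mod_cast hq))]
  have herr : |c| * log 2 < (c' - c) * (s q * log 2) := by
    nlinarith [mul_lt_mul_of_pos_right hq_big hlog2]
  calc c * log q < c' * (s q * log 2) := mul_lt_mul_of_abs_sub_le (hlog q hq0) herr
    _ < L (2 ^ s q) := hq_dyadic
    _ ≤ L q := hL q hq0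

/-- For a monotone positive `ψ : ℕ → ℝ`,
`liminf (-log ψ(q))/log q = liminf (-log ψ(2^t))/log 2^t`. -/
theorem liminf_log_ratio_dyadic (ψ : ℕ → ℝ) (hpos : ∀ q, 0 < ψ q)
    (hmono : Antitone ψ ∨ Monotone ψ) :
    liminf (fun q : ℕ => (((-Real.log (ψ q)) / Real.log (q : ℝ) : ℝ) : EReal)) atTop =
      liminf (fun t : ℕ => (((-Real.log (ψ (2 ^ t))) / Real.log ((2 : ℝ) ^ t) : ℝ) : EReal))
        atTop := by
  have hdyadic : (fun t : ℕ => (((-log (ψ (2 ^ t))) / log ((2 : ℝ) ^ t) : ℝ) : EReal)) =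
      (fun q : ℕ => (((-log (ψ q)) / log q : ℝ) : EReal)) ∘ (2 ^ ·) := by
    funext t; simp
  refine le_antisymm
    (hdyadic ▸ (tendsto_pow_atTop_atTop_of_one_lt one_lt_two).liminf_le_liminf_comp) ?_
  refine EReal.liminf_coe_le_liminf_coe fun c c' hc hev => ?_
  simp only [log_pow] at hev
  have hneg_log {a b : ℕ} (h : ψ b ≤ ψ a) : -log (ψ a) ≤ -log (ψ b) :=
    neg_le_neg (log_le_log (hpos b) h)
  have hlow (q : ℕ) (hq : q ≠ 0) := natLog_mul_log_le_log one_lt_two hq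
  have hupp (q : ℕ) (hq : q ≠ 0) := log_lt_natLog_add_one_mul_log one_lt_two hq
  push_cast at hlow hupp
  rcases hmono with hanti | hmono
  · refine eventually_lt_div_log_of_dyadic (Nat.tendsto_log_atTop one_lt_two)
      (fun q hq => hneg_log (hanti (Nat.pow_log_le_self 2 hq)))
      (fun q hq => abs_sub_le_iff.2 ⟨?_, ?_⟩) hc hev <;> linarith [hlow q hq, hupp q hq]
  · refine eventually_lt_div_log_of_dyadic (s := fun q => Nat.log 2 q + 1)
      ((tendsto_add_atTop_nat 1).comp (Nat.tendsto_log_atTop one_lt_two))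
      (fun q _ => hneg_log (hmono (Nat.lt_pow_succ_log_self one_lt_two q).le))
      (fun q hq => abs_sub_le_iff.2 ⟨?_, ?_⟩) hc hev <;>
      push_cast <;> linarith [hlow q hq, hupp q hq]
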